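/- For all finite-dimensional Hilbert spaces H_A, H_B and every positive integer M, the set C^{EA}_M of joint input-output maps realizable by entanglement-assisted codes, namely C^{EA}_M := { ζ = (E ⊗ D)(· ⊗ |ψ⟩⟨ψ|_{K'K}) : K', K finite-dimensional Hilbert spaces with H_{K'} = H_K, |ψ⟩ a pure state on H_{K'}⊗H_K, E a CPTP map from (M-dimensional classical message system)⊗(operators on H_{K'}) to operators on H_A, D a CPTP map from (operators on H_B)⊗(operators on H_K) to the M-dimensional classical message system }, is a convex subset of the space of linear maps from (M-dimensional classical system)⊗(operators on H_B) to (operators on H_A)⊗(M-dimensional classical system). -/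

import Mathlib

/-! Given two codes with pure shared states `|v₁⟩` on `K₁' ⊗ K₁` and `|v₂⟩` on `K₂' ⊗ K₂`,
share instead `√a |v₁⟩ ⊕ √b |v₂⟩` on `(K₁' ⊕ K₂') ⊗ (K₁ ⊕ K₂)` and let the encoder and the
decoder act as the `i`-th code on the `i`-th block, discarding the off-diagonal blocks. The cross
terms of the superposition live in off-diagonal blocks and are killed, so the new code realises
`a ζ₁ + b ζ₂`; superposing the shared states rather than mixing them keeps the state pure. -/

open scoped Kronecker ComplexOrder
open Matrix Filter

noncomputable section

namespace FQAVC

attribute [local instance] Classical.propDecidable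

variable {I J K L E X : Type*}

/-- A density operator (state) on the finite-dimensional Hilbert space with basis `I`. -/
def IsState [Fintype I] (ρ : Matrix I I ℂ) : Prop :=
  ρ.PosSemidef ∧ ρ.trace = 1

/-- A pure (rank-one) operator `|v⟩⟨v|`. -/
def IsPure (ρ : Matrix I I ℂ) : Prop :=
  ∃ v : I → ℂ, ρ = Matrix.vecMulVec v (star v)

/-- The Choi matrix of a map on matrices. -/
def choi [Fintype I] [DecidableEq I] (f : Matrix I I ℂ → Matrix J J ℂ) :
    Matrix (I × J) (I × J) ℂ :=
  Matrix.of fun p q => f (Matrix.single p.1 q.1 1) p.2 q.2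

/-- Completely positive trace-preserving linear maps (quantum channels). -/
structure CPTP (I J : Type*) [Fintype I] [DecidableEq I] [Fintype J] : Type _ where
  toLin : Matrix I I ℂ →ₗ[ℂ] Matrix J J ℂ
  cp : (choi (⇑toLin)).PosSemidef
  tp : ∀ M : Matrix I I ℂ, (toLin M).trace = M.trace

/-- `f ⊗ id` acting on the first tensor factor. -/
def tensorFst [Fintype I] [DecidableEq I] (f : Matrix I I ℂ → Matrix J J ℂ)
    (ρ : Matrix (I × K) (I × K) ℂ) : Matrix (J × K) (J × K) ℂ :=
  Matrix.of fun p q =>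
    ∑ i, ∑ i', f (Matrix.single i i' 1) p.1 q.1 * ρ (i, p.2) (i', q.2)

/-- `id ⊗ f` acting on the second tensor factor. -/
def idTensor [Fintype I] [DecidableEq I] (f : Matrix I I ℂ → Matrix J J ℂ)
    (ρ : Matrix (K × I) (K × I) ℂ) : Matrix (K × J) (K × J) ℂ :=
  Matrix.of fun p q =>
    ∑ i, ∑ i', f (Matrix.single i i' 1) p.2 q.2 * ρ (p.1, i) (q.1, i')

/-- The channel `N(· ⊗ σ_E)` induced by fixing the jammer state `σ`. -/
def induced (N : Matrix (I × E) (I × E) ℂ → Matrix J J ℂ) (σ : Matrix E E ℂ) :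
    Matrix I I ℂ → Matrix J J ℂ :=
  fun ρ => N (ρ ⊗ₖ σ)

/-- `n`-fold Kronecker (tensor) power of a matrix. -/
def kronPow (n : ℕ) (M : Matrix I I ℂ) : Matrix (Fin n → I) (Fin n → I) ℂ :=
  Matrix.of fun p q => ∏ ℓ, M (p ℓ) (q ℓ)

/-- `n`-fold tensor power of a (linear) map on matrices. -/
def tpow [Fintype I] [DecidableEq I] (n : ℕ) (f : Matrix I I ℂ → Matrix J J ℂ) :
    Matrix (Fin n → I) (Fin n → I) ℂ → Matrix (Fin n → J) (Fin n → J) ℂ :=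
  fun ρ => Matrix.of fun j j' => ∑ i : Fin n → I, ∑ i' : Fin n → I,
    (∏ ℓ, f (Matrix.single (i ℓ) (i' ℓ) 1) (j ℓ) (j' ℓ)) * ρ i i'

/-- The `n`-fold tensor power of a channel with jammer interface, presented as a channel
whose sender input is `Aⁿ` and whose jammer input is `Eⁿ`. -/
def tpowChan [Fintype I] [DecidableEq I] [Fintype E] [DecidableEq E] (n : ℕ)
    (N : Matrix (I × E) (I × E) ℂ → Matrix J J ℂ) :
    Matrix ((Fin n → I) × (Fin n → E)) ((Fin n → I) × (Fin n → E)) ℂ →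
      Matrix (Fin n → J) (Fin n → J) ℂ :=
  fun ρ => tpow n N
    (Matrix.reindex (Equiv.arrowProdEquivProdArrow (Fin n) (fun _ => I) (fun _ => E)).symm
      (Equiv.arrowProdEquivProdArrow (Fin n) (fun _ => I) (fun _ => E)).symm ρ)

/-- POVM with `M` outcomes. -/
def IsPOVM [Fintype J] [DecidableEq J] {M : ℕ} (D : Fin M → Matrix J J ℂ) : Prop :=
  (∀ m, (D m).PosSemidef) ∧ ∑ m, D m = 1

/-- A shared-randomness-assisted code of size `M` for channels from (operators on) `I`
to (operators on) `J`: shared randomness `s`, encoding states `enc s m`, decoder POVMs. -/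
structure SRCode (I J : Type*) [Fintype I] [Fintype J] [DecidableEq J] (M : ℕ) where
  k : ℕ
  hk : 0 < k
  p : Fin k → ℝ
  p_nonneg : ∀ s, 0 ≤ p s
  p_sum : ∑ s, p s = 1
  enc : Fin k → Fin M → Matrix I I ℂ
  enc_state : ∀ s m, IsState (enc s m)
  dec : Fin k → Fin M → Matrix J J ℂ
  dec_povm : ∀ s, IsPOVM (dec s)

/-- Average error of a shared-randomness-assisted code over the channel `NN`. -/
def SRCode.err [Fintype I] [Fintype J] [DecidableEq J] {M : ℕ} (c : SRCode I J M)
    (NN : Matrix I I ℂ → Matrix J J ℂ) : ℝ :=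
  1 - (1 / (M : ℝ)) * ∑ m, ∑ s, c.p s * ((c.dec s m * NN (c.enc s m)).trace).re

/-- An entanglement-assisted code of size `M`: a shared pure entangled state `φ` on
`K' ⊗ K`, encoder CPTP maps `enc m : K' → A`, and a decoder POVM on `B ⊗ K`. -/
structure EACode (I J : Type*) [Fintype I] [DecidableEq I] [Fintype J] [DecidableEq J]
    (M : ℕ) where
  dK : ℕ
  φ : Matrix (Fin dK × Fin dK) (Fin dK × Fin dK) ℂ
  φ_state : IsState φ
  φ_pure : IsPure φ
  enc : Fin M → CPTP (Fin dK) I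
  dec : Fin M → Matrix (J × Fin dK) (J × Fin dK) ℂ
  dec_povm : IsPOVM dec

/-- Average error of an entanglement-assisted code over the channel `NN`. -/
def EACode.err [Fintype I] [DecidableEq I] [Fintype J] [DecidableEq J] {M : ℕ}
    (c : EACode I J M) (NN : Matrix I I ℂ → Matrix J J ℂ) : ℝ :=
  1 - (1 / (M : ℝ)) *
    ∑ m, ((c.dec m * tensorFst NN (tensorFst (⇑(c.enc m).toLin) c.φ)).trace).re

/-- Worst-case (over jammer states) average error of an SR code. -/
def worstErrSR [Fintype I] [Fintype J] [DecidableEq J] [Fintype E] {M : ℕ}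
    (c : SRCode I J M) (N : Matrix (I × E) (I × E) ℂ → Matrix J J ℂ) : ℝ :=
  sSup {x : ℝ | ∃ σ : Matrix E E ℂ, IsState σ ∧ x = c.err (induced N σ)}

/-- Worst-case (over jammer states) average error of an EA code. -/
def worstErrEA [Fintype I] [DecidableEq I] [Fintype J] [DecidableEq J] [Fintype E] {M : ℕ}
    (c : EACode I J M) (N : Matrix (I × E) (I × E) ℂ → Matrix J J ℂ) : ℝ :=
  sSup {x : ℝ | ∃ σ : Matrix E E ℂ, IsState σ ∧ x = c.err (induced N σ)}

/-- Largest SR code size with average error at most `ε` for a fixed channel (in `ℕ∞`). -/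
def MSRmax [Fintype I] [Fintype J] [DecidableEq J] (ε : ℝ)
    (NN : Matrix I I ℂ → Matrix J J ℂ) : ℕ∞ :=
  sSup ((fun m : ℕ => (m : ℕ∞)) '' {m : ℕ | ∃ c : SRCode I J m, c.err NN ≤ ε})

/-- Largest SR code size with average error at most `ε` against every jammer state (in `ℕ∞`). -/
def MSRforall [Fintype I] [Fintype J] [DecidableEq J] [Fintype E] (ε : ℝ)
    (N : Matrix (I × E) (I × E) ℂ → Matrix J J ℂ) : ℕ∞ :=
  sSup ((fun m : ℕ => (m : ℕ∞)) ''
    {m : ℕ | ∃ c : SRCode I J m, ∀ σ : Matrix E E ℂ, IsState σ → c.err (induced N σ) ≤ ε})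

/-- Largest EA code size with average error at most `ε` for a fixed channel (in `ℕ∞`). -/
def MEAmax [Fintype I] [DecidableEq I] [Fintype J] [DecidableEq J] (ε : ℝ)
    (NN : Matrix I I ℂ → Matrix J J ℂ) : ℕ∞ :=
  sSup ((fun m : ℕ => (m : ℕ∞)) '' {m : ℕ | ∃ c : EACode I J m, c.err NN ≤ ε})

/-- Largest EA code size with average error at most `ε` against every jammer state (in `ℕ∞`). -/
def MEAforall [Fintype I] [DecidableEq I] [Fintype J] [DecidableEq J] [Fintype E] (ε : ℝ)
    (N : Matrix (I × E) (I × E) ℂ → Matrix J J ℂ) : ℕ∞ :=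
  sSup ((fun m : ℕ => (m : ℕ∞)) ''
    {m : ℕ | ∃ c : EACode I J m, ∀ σ : Matrix E E ℂ, IsState σ → c.err (induced N σ) ≤ ε})

/-- Largest SR code size with error at most `ε` against every jammer state (as a natural number). -/
def MSRforallNat [Fintype I] [Fintype J] [DecidableEq J] [Fintype E] (ε : ℝ)
    (N : Matrix (I × E) (I × E) ℂ → Matrix J J ℂ) : ℕ :=
  sSup {m : ℕ | ∃ c : SRCode I J m, ∀ σ : Matrix E E ℂ, IsState σ → c.err (induced N σ) ≤ ε}

/-- Largest EA code size with error at most `ε` against every jammer state (as a natural number). -/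
def MEAforallNat [Fintype I] [DecidableEq I] [Fintype J] [DecidableEq J] [Fintype E] (ε : ℝ)
    (N : Matrix (I × E) (I × E) ℂ → Matrix J J ℂ) : ℕ :=
  sSup {m : ℕ | ∃ c : EACode I J m, ∀ σ : Matrix E E ℂ, IsState σ → c.err (induced N σ) ≤ ε}

/-- Largest classical-input SR code size (encoders map messages to classical, i.e. diagonal,
states) with error at most `ε` against every jammer state. -/
def MSRforallCQNat [Fintype X] [Fintype J] [DecidableEq J] [Fintype E] (ε : ℝ)
    (N : Matrix (X × E) (X × E) ℂ → Matrix J J ℂ) : ℕ :=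
  sSup {m : ℕ | ∃ c : SRCode X J m, (∀ s mm, (c.enc s mm).IsDiag) ∧
    ∀ σ : Matrix E E ℂ, IsState σ → c.err (induced N σ) ≤ ε}

/-- Minimal average error among SR codes of size `M` for a fixed channel. -/
def errSRmin [Fintype I] [Fintype J] [DecidableEq J] (M : ℕ)
    (NN : Matrix I I ℂ → Matrix J J ℂ) : ℝ :=
  sInf {e : ℝ | ∃ c : SRCode I J M, e = c.err NN}

/-- Minimal worst-case average error among SR codes of size `M` against all jammer states. -/
def errSRminForall [Fintype I] [Fintype J] [DecidableEq J] [Fintype E] (M : ℕ)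
    (N : Matrix (I × E) (I × E) ℂ → Matrix J J ℂ) : ℝ :=
  sInf {e : ℝ | ∃ c : SRCode I J M, e = worstErrSR c N}

/-- Minimal average error among EA codes of size `M` for a fixed channel. -/
def errEAmin [Fintype I] [DecidableEq I] [Fintype J] [DecidableEq J] (M : ℕ)
    (NN : Matrix I I ℂ → Matrix J J ℂ) : ℝ :=
  sInf {e : ℝ | ∃ c : EACode I J M, e = c.err NN}

/-- Minimal worst-case average error among EA codes of size `M` against all jammer states. -/
def errEAminForall [Fintype I] [DecidableEq I] [Fintype J] [DecidableEq J] [Fintype E] (M : ℕ)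
    (N : Matrix (I × E) (I × E) ℂ → Matrix J J ℂ) : ℝ :=
  sInf {e : ℝ | ∃ c : EACode I J M, e = worstErrEA c N}

/-- Von Neumann entropy (base 2) of a matrix via its eigenvalues (junk value `0` if
not Hermitian). -/
def vN [Fintype I] [DecidableEq I] (ρ : Matrix I I ℂ) : ℝ :=
  if h : ρ.IsHermitian then -∑ i, h.eigenvalues i * Real.logb 2 (h.eigenvalues i) else 0

/-- Partial trace over the second tensor factor. -/
def ptraceSnd [Fintype K] (ρ : Matrix (I × K) (I × K) ℂ) : Matrix I I ℂ :=
  Matrix.of fun i i' => ∑ k, ρ (i, k) (i', k)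

/-- Partial trace over the first tensor factor. -/
def ptraceFst [Fintype I] (ρ : Matrix (I × K) (I × K) ℂ) : Matrix K K ℂ :=
  Matrix.of fun k k' => ∑ i, ρ (i, k) (i, k')

/-- Quantum mutual information `I(A:B) = S(A) + S(B) − S(AB)` of a bipartite state. -/
def MI [Fintype I] [DecidableEq I] [Fintype K] [DecidableEq K]
    (ρ : Matrix (I × K) (I × K) ℂ) : ℝ :=
  vN (ptraceSnd ρ) + vN (ptraceFst ρ) - vN ρ

/-- Coherent information `I_c(A⟩B) = S(B) − S(AB)` of a bipartite state. -/
def cohInfo [Fintype I] [DecidableEq I] [Fintype K] [DecidableEq K]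
    (ρ : Matrix (I × K) (I × K) ℂ) : ℝ :=
  vN (ptraceFst ρ) - vN ρ

/-- Positive semidefinite square root (junk value `0` if not PSD). -/
def matSqrt [Fintype I] [DecidableEq I] (ρ : Matrix I I ℂ) : Matrix I I ℂ :=
  if h : ρ.PosSemidef then
    (h.1.eigenvectorUnitary : Matrix I I ℂ) *
      Matrix.diagonal (fun i => ((Real.sqrt (h.1.eigenvalues i) : ℝ) : ℂ)) *
      (star h.1.eigenvectorUnitary : Matrix I I ℂ)
  else 0

/-- Canonical purification `|ρ⟩⟨ρ|` of a state `ρ`, with the purifying system first. -/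
def purification [Fintype I] [DecidableEq I] (ρ : Matrix I I ℂ) :
    Matrix (I × I) (I × I) ℂ :=
  Matrix.of fun p q => matSqrt ρ p.1 p.2 * star (matSqrt ρ q.1 q.2)

/-- The output state `(id_{A'} ⊗ N)(|ρ⟩⟨ρ|_{A'A} ⊗ σ_E)`. -/
def outState [Fintype I] [DecidableEq I] [Fintype E] (N : Matrix (I × E) (I × E) ℂ → Matrix J J ℂ)
    (ρ : Matrix I I ℂ) (σ : Matrix E E ℂ) : Matrix (I × J) (I × J) ℂ :=
  idTensor (induced N σ) (purification ρ)

/-- The adversarial mutual information `I_{adv.E}(N) = sup_ρ inf_σ I(A':B)`. -/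
def IadvE [Fintype I] [DecidableEq I] [Fintype E] [Fintype J] [DecidableEq J]
    (N : Matrix (I × E) (I × E) ℂ → Matrix J J ℂ) : ℝ :=
  ⨆ ρ : {ρ : Matrix I I ℂ // IsState ρ}, ⨅ σ : {σ : Matrix E E ℂ // IsState σ},
    MI (outState N ρ.1 σ.1)

/-- Matrix logarithm (base 2) of a Hermitian matrix via the spectral theorem
(junk value `0` if not Hermitian; zero eigenvalues give `log 0 = 0`). -/
def matLog [Fintype I] [DecidableEq I] (A : Matrix I I ℂ) : Matrix I I ℂ :=
  if h : A.IsHermitian then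
    (h.eigenvectorUnitary : Matrix I I ℂ) *
      Matrix.diagonal (fun i => (Real.logb 2 (h.eigenvalues i) : ℂ)) *
      (star h.eigenvectorUnitary : Matrix I I ℂ)
  else 0

/-- Quantum relative entropy (base 2), `+∞` if the support condition fails. -/
def relEnt [Fintype I] [DecidableEq I] (ρ σ : Matrix I I ℂ) : EReal :=
  if ∀ v : I → ℂ, σ *ᵥ v = 0 → ρ *ᵥ v = 0 then
    (((ρ * (matLog ρ - matLog σ)).trace).re : EReal)
  else ⊤

/-- Hypothesis-testing divergence `D_h^ε(ρ‖σ)` (base 2). -/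
def Dh [Fintype I] [DecidableEq I] (ε : ℝ) (ρ σ : Matrix I I ℂ) : ℝ :=
  -Real.logb 2 (sInf {x : ℝ | ∃ T : Matrix I I ℂ, T.PosSemidef ∧ (1 - T).PosSemidef ∧
    1 - ε ≤ ((T * ρ).trace).re ∧ x = ((T * σ).trace).re})

/-- A linear map on matrices given entrywise by coefficients. -/
def ofCoeffs [Fintype I] (f : I → I → J → J → ℂ) :
    Matrix I I ℂ →ₗ[ℂ] Matrix J J ℂ where
  toFun M := Matrix.of fun j j' => ∑ i, ∑ i', M i i' * f i i' j j'
  map_add' M N := by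
    ext j j'
    simp [Matrix.add_apply, add_mul, Finset.sum_add_distrib]
  map_smul' c M := by
    ext j j'
    simp [Matrix.smul_apply, smul_eq_mul, Finset.mul_sum, mul_assoc]

/-- The tensor product `Φ ⊗ Ψ` of two linear maps on matrices. -/
def lmapTensor [Fintype I] [DecidableEq I] [Fintype K] [DecidableEq K]
    (Φ : Matrix I I ℂ →ₗ[ℂ] Matrix J J ℂ) (Ψ : Matrix K K ℂ →ₗ[ℂ] Matrix L L ℂ) :
    Matrix (I × K) (I × K) ℂ →ₗ[ℂ] Matrix (J × L) (J × L) ℂ :=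
  ofCoeffs fun i i' j j' =>
    Φ (Matrix.single i.1 i'.1 1) j.1 j'.1 *
      Ψ (Matrix.single i.2 i'.2 1) j.2 j'.2

/-- Pinching (dephasing) of the first tensor factor. -/
def pinchFst (χ : Matrix (I × K) (I × K) ℂ) : Matrix (I × K) (I × K) ℂ :=
  Matrix.of fun p q => if p.1 = q.1 then χ p q else 0

/-- A CPTP map out of the `M`-dimensional classical message system is classical-input
if it only depends on the diagonal (classical) part of its input. -/
def ClassicalInput [Fintype J] {M : ℕ} (Φ : CPTP (Fin M) J) : Prop :=
  ∀ χ : Matrix (Fin M) (Fin M) ℂ, Φ.toLin χ = Φ.toLin (Matrix.diagonal fun m => χ m m)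

/-- A CPTP map into the `M`-dimensional classical message system is classical-output
if its outputs are diagonal (classical). -/
def ClassicalOutput [Fintype J] [DecidableEq J] {M : ℕ} (Φ : CPTP J (Fin M)) : Prop :=
  ∀ ρ : Matrix J J ℂ, Φ.toLin ρ = Matrix.diagonal fun m => Φ.toLin ρ m m

/-- A CPTP map whose input has a classical first (message) tensor factor. -/
def ClassicalInputFst [Fintype K] [DecidableEq K] [Fintype J] {M : ℕ}
    (Φ : CPTP (Fin M × K) J) : Prop :=
  ∀ χ : Matrix (Fin M × K) (Fin M × K) ℂ, Φ.toLin χ = Φ.toLin (pinchFst χ)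

/-- The maximally entangled state on `Fin d × Fin d`. -/
def maxEnt (d : ℕ) : Matrix (Fin d × Fin d) (Fin d × Fin d) ℂ :=
  Matrix.of fun p q => if p.1 = p.2 ∧ q.1 = q.2 then (1 / (d : ℂ)) else 0

/-- A shared-randomness-assisted quantum code with message dimension `dM`. -/
structure SRQCode (I J : Type*) [Fintype I] [DecidableEq I] [Fintype J] [DecidableEq J]
    (dM : ℕ) where
  k : ℕ
  hk : 0 < k
  p : Fin k → ℝ
  p_nonneg : ∀ s, 0 ≤ p s
  p_sum : ∑ s, p s = 1
  enc : Fin k → CPTP (Fin dM) I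
  dec : Fin k → CPTP J (Fin dM)

/-- Entanglement fidelity of a shared-randomness-assisted quantum code over the channel `NN`. -/
def SRQCode.fid [Fintype I] [DecidableEq I] [Fintype J] [DecidableEq J] {dM : ℕ}
    (c : SRQCode I J dM) (NN : Matrix I I ℂ → Matrix J J ℂ) : ℝ :=
  ((maxEnt dM *
    idTensor (fun ρ => ∑ s, c.p s • ((c.dec s).toLin (NN ((c.enc s).toLin ρ))))
      (maxEnt dM)).trace).re

/-- Entanglement-assisted classical capacity of the FQAVC associated with `N`. -/
def CEAfqavc [Fintype I] [DecidableEq I] [Fintype E] [DecidableEq E] [Fintype J] [DecidableEq J]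
    (N : Matrix (I × E) (I × E) ℂ → Matrix J J ℂ) : ℝ :=
  sSup {r : ℝ | 0 ≤ r ∧
    ∃ codes : (n : ℕ) → EACode (Fin n → I) (Fin n → J) ⌈(2 : ℝ) ^ ((n : ℝ) * r)⌉₊,
      Filter.Tendsto (fun n => worstErrEA (codes n) (tpowChan n N)) Filter.atTop (nhds 0)}

/-- Shared-randomness-assisted classical capacity of the FQAVC associated with `N`. -/
def CSRfqavc [Fintype I] [DecidableEq I] [Fintype E] [DecidableEq E] [Fintype J] [DecidableEq J]
    (N : Matrix (I × E) (I × E) ℂ → Matrix J J ℂ) : ℝ :=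
  sSup {r : ℝ | 0 ≤ r ∧
    ∃ codes : (n : ℕ) → SRCode (Fin n → I) (Fin n → J) ⌈(2 : ℝ) ^ ((n : ℝ) * r)⌉₊,
      Filter.Tendsto (fun n => worstErrSR (codes n) (tpowChan n N)) Filter.atTop (nhds 0)}

/-- Shared-randomness-assisted classical capacity of the classical-quantum FQAVC
associated with `N` (encoders produce classical, i.e. diagonal, states on the input). -/
def CSRfqavcCQ [Fintype X] [DecidableEq X] [Fintype E] [DecidableEq E] [Fintype J] [DecidableEq J]
    (N : Matrix (X × E) (X × E) ℂ → Matrix J J ℂ) : ℝ :=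
  sSup {r : ℝ | 0 ≤ r ∧
    ∃ codes : (n : ℕ) → SRCode (Fin n → X) (Fin n → J) ⌈(2 : ℝ) ^ ((n : ℝ) * r)⌉₊,
      (∀ n s mm, ((codes n).enc s mm).IsDiag) ∧
      Filter.Tendsto (fun n => worstErrSR (codes n) (tpowChan n N)) Filter.atTop (nhds 0)}

/-- Shared-randomness-assisted quantum capacity of the FQAVC associated with `N`. -/
def QSRfqavc [Fintype I] [DecidableEq I] [Fintype E] [DecidableEq E] [Fintype J] [DecidableEq J]
    (N : Matrix (I × E) (I × E) ℂ → Matrix J J ℂ) : ℝ :=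
  sSup {r : ℝ | 0 ≤ r ∧
    ∃ codes : (n : ℕ) → SRQCode (Fin n → I) (Fin n → J) (2 ^ ⌈(n : ℝ) * r⌉₊),
      Filter.Tendsto
        (fun n => sInf {x : ℝ | ∃ σ : Matrix (Fin n → E) (Fin n → E) ℂ, IsState σ ∧
          x = (codes n).fid (induced (tpowChan n N) σ)})
        Filter.atTop (nhds 1)}

/-- The Holevo quantity of a channel maximized over classical-quantum input ensembles. -/
def holevoCap [Fintype I] [Fintype J] [DecidableEq J]
    (G : Matrix I I ℂ → Matrix J J ℂ) : ℝ :=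
  ⨆ dX : ℕ, ⨆ p : {p : Fin dX → ℝ // (∀ x, 0 ≤ p x) ∧ ∑ x, p x = 1},
    ⨆ ρs : {ρs : Fin dX → Matrix I I ℂ // ∀ x, IsState (ρs x)},
      MI (∑ x, p.1 x • (Matrix.single x x (1 : ℂ) ⊗ₖ G (ρs.1 x)))

/-- The cq output state `Σ_x p(x) |x⟩⟨x| ⊗ N(|x⟩⟨x| ⊗ σ)`. -/
def cqOut [Fintype X] [DecidableEq X] [Fintype E] [Fintype J]
    (N : Matrix (X × E) (X × E) ℂ → Matrix J J ℂ) (p : X → ℝ) (σ : Matrix E E ℂ) :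
    Matrix (X × J) (X × J) ℂ :=
  ∑ x, p x • (Matrix.single x x (1 : ℂ) ⊗ₖ N (Matrix.single x x (1 : ℂ) ⊗ₖ σ))

section LinearMapsOnMatrices

variable {m n I' K' : Type*}

def submatrixLinearMap (g : m → n) : Matrix n n ℂ →ₗ[ℂ] Matrix m m ℂ where
  toFun X := X.submatrix g g
  map_add' _ _ := rfl
  map_smul' _ _ := rfl

@[simp] lemma submatrixLinearMap_apply (g : m → n) (X : Matrix n n ℂ) :
    submatrixLinearMap g X = X.submatrix g g := rfl

lemma linearMap_apply_eq_sum_single [Fintype m] [DecidableEq m]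
    (Φ : Matrix m m ℂ →ₗ[ℂ] Matrix n n ℂ) (X : Matrix m m ℂ) (j j' : n) :
    Φ X j j' = ∑ i, ∑ i', X i i' * Φ (Matrix.single i i' 1) j j' := by
  conv_lhs => rw [Matrix.matrix_eq_sum_single X]
  simp only [map_sum, Matrix.sum_apply]
  refine Finset.sum_congr rfl fun i _ => Finset.sum_congr rfl fun i' _ => ?_
  rw [show Matrix.single i i' (X i i') = X i i' • Matrix.single i i' (1 : ℂ) by
    rw [Matrix.smul_single, smul_eq_mul, mul_one], _root_.map_smul, Matrix.smul_apply, smul_eq_mul]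

lemma lmapTensor_add_left [Fintype I] [DecidableEq I] [Fintype K] [DecidableEq K]
    (Φ₁ Φ₂ : Matrix I I ℂ →ₗ[ℂ] Matrix J J ℂ) (Ψ : Matrix K K ℂ →ₗ[ℂ] Matrix L L ℂ) :
    lmapTensor (Φ₁ + Φ₂) Ψ = lmapTensor Φ₁ Ψ + lmapTensor Φ₂ Ψ := by
  ext X j j'
  simp [lmapTensor, ofCoeffs, add_mul, mul_add, Finset.sum_add_distrib]

lemma lmapTensor_add_right [Fintype I] [DecidableEq I] [Fintype K] [DecidableEq K]
    (Φ : Matrix I I ℂ →ₗ[ℂ] Matrix J J ℂ) (Ψ₁ Ψ₂ : Matrix K K ℂ →ₗ[ℂ] Matrix L L ℂ) :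
    lmapTensor Φ (Ψ₁ + Ψ₂) = lmapTensor Φ Ψ₁ + lmapTensor Φ Ψ₂ := by
  ext X j j'
  simp [lmapTensor, ofCoeffs, mul_add, Finset.sum_add_distrib]

lemma lmapTensor_kronecker [Fintype I] [DecidableEq I] [Fintype K] [DecidableEq K]
    (Φ : Matrix I I ℂ →ₗ[ℂ] Matrix J J ℂ) (Ψ : Matrix K K ℂ →ₗ[ℂ] Matrix L L ℂ)
    (A : Matrix I I ℂ) (B : Matrix K K ℂ) :
    lmapTensor Φ Ψ (A ⊗ₖ B) = Φ A ⊗ₖ Ψ B := by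
  ext j j'
  simp only [lmapTensor, ofCoeffs, LinearMap.coe_mk, AddHom.coe_mk, Matrix.of_apply,
    Matrix.kroneckerMap_apply, linearMap_apply_eq_sum_single Φ A,
    linearMap_apply_eq_sum_single Ψ B, Fintype.sum_prod_type, Finset.sum_mul_sum]
  refine Finset.sum_congr rfl fun i _ => Finset.sum_congr rfl fun k _ =>
    Finset.sum_congr rfl fun i' _ => Finset.sum_congr rfl fun k' _ => ?_
  ring

lemma lmapTensor_single [Fintype I] [DecidableEq I] [Fintype K] [DecidableEq K]
    (Φ : Matrix I I ℂ →ₗ[ℂ] Matrix J J ℂ) (Ψ : Matrix K K ℂ →ₗ[ℂ] Matrix L L ℂ)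
    (p q : I × K) :
    lmapTensor Φ Ψ (Matrix.single p q 1) =
      Φ (Matrix.single p.1 q.1 1) ⊗ₖ Ψ (Matrix.single p.2 q.2 1) := by
  rw [← lmapTensor_kronecker, Matrix.single_kronecker_single, mul_one]

lemma lmapTensor_comp [Fintype I] [DecidableEq I] [Fintype K] [DecidableEq K]
    [Fintype I'] [DecidableEq I'] [Fintype K'] [DecidableEq K']
    (Φ : Matrix I' I' ℂ →ₗ[ℂ] Matrix J J ℂ) (Ψ : Matrix K' K' ℂ →ₗ[ℂ] Matrix L L ℂ)
    (P : Matrix I I ℂ →ₗ[ℂ] Matrix I' I' ℂ) (Q : Matrix K K ℂ →ₗ[ℂ] Matrix K' K' ℂ) :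
    lmapTensor (Φ ∘ₗ P) (Ψ ∘ₗ Q) = lmapTensor Φ Ψ ∘ₗ lmapTensor P Q := by
  refine Matrix.ext_linearMap ℂ fun p q => LinearMap.ext_ring ?_
  simp only [LinearMap.comp_apply, Matrix.singleLinearMap_apply, lmapTensor_single,
    lmapTensor_kronecker]

lemma lmapTensor_submatrixLinearMap [Fintype I] [DecidableEq I] [Fintype K] [DecidableEq K]
    (g : J → I) (h : L → K) (X : Matrix (I × K) (I × K) ℂ) :
    lmapTensor (submatrixLinearMap g) (submatrixLinearMap h) X
      = X.submatrix (Prod.map g h) (Prod.map g h) := by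
  ext j j'
  have hsingle : ∀ i i' : I × K, Matrix.single i.1 i'.1 (1 : ℂ) (g j.1) (g j'.1) *
      Matrix.single i.2 i'.2 (1 : ℂ) (h j.2) (h j'.2) =
        if i = Prod.map g h j ∧ i' = Prod.map g h j' then 1 else 0 := by
    intro i i'
    simp only [Matrix.single_apply, Prod.ext_iff, Prod.map_fst, Prod.map_snd]
    grind
  simp only [lmapTensor, ofCoeffs, LinearMap.coe_mk, AddHom.coe_mk, submatrixLinearMap_apply,
    Matrix.submatrix_apply, Matrix.of_apply, hsingle, mul_ite, mul_one, mul_zero, ite_and]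
  simp

lemma choi_add [Fintype I] [DecidableEq I] (f g : Matrix I I ℂ →ₗ[ℂ] Matrix J J ℂ) :
    choi ⇑(f + g) = choi ⇑f + choi ⇑g := rfl

lemma choi_comp_submatrixLinearMap [Fintype m] [DecidableEq m] [Fintype n] [DecidableEq n]
    [Fintype J] (Φ : Matrix m m ℂ →ₗ[ℂ] Matrix J J ℂ) (g : m → n) :
    choi ⇑(Φ ∘ₗ submatrixLinearMap g) =
      ((1 : Matrix (n × J) (n × J) ℂ).submatrix (Prod.map g id) id)ᴴ * choi ⇑Φ *
        (1 : Matrix (n × J) (n × J) ℂ).submatrix (Prod.map g id) id := by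
  ext ⟨x, j⟩ ⟨x', j'⟩
  simp only [choi, LinearMap.comp_apply, submatrixLinearMap_apply, Matrix.of_apply]
  rw [linearMap_apply_eq_sum_single Φ]
  simp only [Matrix.mul_apply, Matrix.conjTranspose_apply, Matrix.submatrix_apply,
    Matrix.one_apply, Matrix.single_apply, Fintype.sum_prod_type, Prod.map_apply, id_eq,
    Prod.mk.injEq, Matrix.of_apply, apply_ite (star : ℂ → ℂ), star_one, star_zero, ite_and,
    ite_mul, mul_ite, one_mul, zero_mul, mul_one, mul_zero, Finset.sum_ite_eq', Finset.mem_univ,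
    if_true, Finset.sum_ite_irrel, Finset.sum_const_zero]
  simp only [← Finset.sum_filter, eq_comm (a := x), eq_comm (a := x')]
  exact Finset.sum_comm

end LinearMapsOnMatrices

lemma trace_submatrix_castAdd_add_natAdd {A : Type*} [Fintype A] {d₁ d₂ : ℕ}
    (X : Matrix (A × Fin (d₁ + d₂)) (A × Fin (d₁ + d₂)) ℂ) :
    (submatrixLinearMap (Prod.map id (Fin.castAdd d₂)) X).trace +
      (submatrixLinearMap (Prod.map id (Fin.natAdd d₁)) X).trace = X.trace := by
  simp only [Matrix.trace, Matrix.diag, submatrixLinearMap_apply, Matrix.submatrix_apply,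
    Fintype.sum_prod_type, Prod.map_apply, id_eq, ← Finset.sum_add_distrib, Fin.sum_univ_add]

section BlockSum

variable {A : Type*} [Fintype A] [DecidableEq A] [Fintype J] {d₁ d₂ : ℕ}

def CPTP.blockSum (E₁ : CPTP (A × Fin d₁) J) (E₂ : CPTP (A × Fin d₂) J) :
    CPTP (A × Fin (d₁ + d₂)) J where
  toLin := E₁.toLin ∘ₗ submatrixLinearMap (Prod.map id (Fin.castAdd d₂)) +
    E₂.toLin ∘ₗ submatrixLinearMap (Prod.map id (Fin.natAdd d₁))
  cp := by
    rw [choi_add, choi_comp_submatrixLinearMap, choi_comp_submatrixLinearMap]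
    exact (E₁.cp.conjTranspose_mul_mul_same _).add (E₂.cp.conjTranspose_mul_mul_same _)
  tp X := by
    simp only [LinearMap.add_apply, LinearMap.comp_apply, Matrix.trace_add, E₁.tp, E₂.tp,
      trace_submatrix_castAdd_add_natAdd]

lemma classicalInputFst_blockSum {M : ℕ} {E₁ : CPTP (Fin M × Fin d₁) J}
    {E₂ : CPTP (Fin M × Fin d₂) J} (h₁ : ClassicalInputFst E₁) (h₂ : ClassicalInputFst E₂) :
    ClassicalInputFst (E₁.blockSum E₂) := by
  intro χ
  simp only [CPTP.blockSum, LinearMap.add_apply, LinearMap.comp_apply]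
  rw [h₁, h₂]
  rfl

lemma classicalOutput_iff_isDiag [DecidableEq J] {M : ℕ} (D : CPTP J (Fin M)) :
    ClassicalOutput D ↔ ∀ ρ, (D.toLin ρ).IsDiag := by
  simp only [ClassicalOutput, Matrix.isDiag_iff_diagonal_diag, eq_comm]
  rfl

lemma classicalOutput_blockSum [DecidableEq J] {M : ℕ} {D₁ : CPTP (J × Fin d₁) (Fin M)}
    {D₂ : CPTP (J × Fin d₂) (Fin M)} (h₁ : ClassicalOutput D₁) (h₂ : ClassicalOutput D₂) :
    ClassicalOutput (D₁.blockSum D₂) := by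
  rw [classicalOutput_iff_isDiag] at *
  exact fun ρ => (h₁ _).add (h₂ _)

end BlockSum

lemma trace_vecMulVec_star_eq_sum {n : Type*} [Fintype n] (v : n → ℂ) :
    (Matrix.vecMulVec v (star v)).trace = ∑ p, star (v p) * v p := by
  simp [Matrix.trace_vecMulVec, dotProduct, mul_comm]

section MixedState

variable {d₁ d₂ : ℕ}

/-- The vector `√a v₁ ⊕ √b v₂`, a purification of `a ψ₁ ⊕ b ψ₂` where `ψᵢ = |vᵢ⟩⟨vᵢ|`. -/
def mixVec (a b : ℝ) (v₁ : Fin d₁ × Fin d₁ → ℂ) (v₂ : Fin d₂ × Fin d₂ → ℂ) :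
    Fin (d₁ + d₂) × Fin (d₁ + d₂) → ℂ := fun p =>
  Fin.addCases (fun c => Fin.addCases (fun c' => √a • v₁ (c, c')) 0 p.2)
    (fun c => Fin.addCases 0 (fun c' => √b • v₂ (c, c')) p.2) p.1

variable (a b : ℝ) (v₁ : Fin d₁ × Fin d₁ → ℂ) (v₂ : Fin d₂ × Fin d₂ → ℂ)

@[simp] lemma mixVec_castAdd_castAdd (c c' : Fin d₁) :
    mixVec a b v₁ v₂ (Fin.castAdd d₂ c, Fin.castAdd d₂ c') = √a • v₁ (c, c') := by
  simp [mixVec]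

@[simp] lemma mixVec_castAdd_natAdd (c : Fin d₁) (c' : Fin d₂) :
    mixVec a b v₁ v₂ (Fin.castAdd d₂ c, Fin.natAdd d₁ c') = 0 := by
  simp [mixVec]

@[simp] lemma mixVec_natAdd_castAdd (c : Fin d₂) (c' : Fin d₁) :
    mixVec a b v₁ v₂ (Fin.natAdd d₁ c, Fin.castAdd d₂ c') = 0 := by
  simp [mixVec]

@[simp] lemma mixVec_natAdd_natAdd (c c' : Fin d₂) :
    mixVec a b v₁ v₂ (Fin.natAdd d₁ c, Fin.natAdd d₁ c') = √b • v₂ (c, c') := by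
  simp [mixVec]

variable {a b v₁ v₂}

lemma isState_vecMulVec_mixVec (ha : 0 ≤ a) (hb : 0 ≤ b) (hab : a + b = 1)
    (h₁ : IsState (Matrix.vecMulVec v₁ (star v₁))) (h₂ : IsState (Matrix.vecMulVec v₂ (star v₂))) :
    IsState (Matrix.vecMulVec (mixVec a b v₁ v₂) (star (mixVec a b v₁ v₂))) := by
  refine ⟨Matrix.posSemidef_vecMulVec_self_star _, ?_⟩
  have h₁ := h₁.2
  have h₂ := h₂.2
  rw [trace_vecMulVec_star_eq_sum, Fintype.sum_prod_type] at h₁ h₂ ⊢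
  simp only [Fin.sum_univ_add, mixVec_castAdd_castAdd, mixVec_castAdd_natAdd,
    mixVec_natAdd_castAdd, mixVec_natAdd_natAdd, star_zero, mul_zero, Finset.sum_const_zero,
    add_zero, zero_add, star_smul, smul_mul_smul, star_trivial, ← Finset.smul_sum, h₁, h₂,
    Real.mul_self_sqrt ha, Real.mul_self_sqrt hb]
  rw [← add_smul, hab, one_smul]

end MixedState

section EntanglementAssisted

variable {I' K' N : Type*} [Fintype I] [DecidableEq I] [Fintype L] [DecidableEq L]
  [Fintype K] [DecidableEq K] [Fintype K'] [DecidableEq K']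

/-- The map `χ ↦ (Φ ⊗ Ψ)(χ ⊗ ψ)` of an entanglement-assisted code with encoder `Φ` on `I × K'`,
decoder `Ψ` on `L × K` and shared state `ψ` on `K' × K`. -/
def eaMap (Φ : Matrix (I × K') (I × K') ℂ →ₗ[ℂ] Matrix J J ℂ)
    (Ψ : Matrix (L × K) (L × K) ℂ →ₗ[ℂ] Matrix N N ℂ) (ψ : Matrix (K' × K) (K' × K) ℂ)
    (χ : Matrix (I × L) (I × L) ℂ) : Matrix (J × N) (J × N) ℂ :=
  lmapTensor Φ Ψ (Matrix.reindex (Equiv.prodProdProdComm I L K' K)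
    (Equiv.prodProdProdComm I L K' K) (χ ⊗ₖ ψ))

lemma eaMap_add_left (Φ₁ Φ₂ : Matrix (I × K') (I × K') ℂ →ₗ[ℂ] Matrix J J ℂ)
    (Ψ : Matrix (L × K) (L × K) ℂ →ₗ[ℂ] Matrix N N ℂ) (ψ : Matrix (K' × K) (K' × K) ℂ)
    (χ : Matrix (I × L) (I × L) ℂ) :
    eaMap (Φ₁ + Φ₂) Ψ ψ χ = eaMap Φ₁ Ψ ψ χ + eaMap Φ₂ Ψ ψ χ := by
  simp only [eaMap, lmapTensor_add_left, LinearMap.add_apply]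

lemma eaMap_add_right (Φ : Matrix (I × K') (I × K') ℂ →ₗ[ℂ] Matrix J J ℂ)
    (Ψ₁ Ψ₂ : Matrix (L × K) (L × K) ℂ →ₗ[ℂ] Matrix N N ℂ) (ψ : Matrix (K' × K) (K' × K) ℂ)
    (χ : Matrix (I × L) (I × L) ℂ) :
    eaMap Φ (Ψ₁ + Ψ₂) ψ χ = eaMap Φ Ψ₁ ψ χ + eaMap Φ Ψ₂ ψ χ := by
  simp only [eaMap, lmapTensor_add_right, LinearMap.add_apply]

lemma eaMap_smul_state (Φ : Matrix (I × K') (I × K') ℂ →ₗ[ℂ] Matrix J J ℂ)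
    (Ψ : Matrix (L × K) (L × K) ℂ →ₗ[ℂ] Matrix N N ℂ) (c : ℝ) (ψ : Matrix (K' × K) (K' × K) ℂ)
    (χ : Matrix (I × L) (I × L) ℂ) :
    eaMap Φ Ψ (c • ψ) χ = c • eaMap Φ Ψ ψ χ := by
  rw [eaMap, eaMap, Matrix.kronecker_smul, ← Matrix.coe_reindexLinearEquiv ℝ ℂ, _root_.map_smul,
    LinearMap.map_smul_of_tower, Matrix.coe_reindexLinearEquiv]

lemma eaMap_comp_submatrixLinearMap {K₀' K₀ : Type*} [Fintype K₀'] [DecidableEq K₀']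
    [Fintype K₀] [DecidableEq K₀] (Φ : Matrix (I × K₀') (I × K₀') ℂ →ₗ[ℂ] Matrix J J ℂ)
    (Ψ : Matrix (L × K₀) (L × K₀) ℂ →ₗ[ℂ] Matrix N N ℂ) (f : K₀' → K') (g : K₀ → K)
    (ψ : Matrix (K' × K) (K' × K) ℂ) (χ : Matrix (I × L) (I × L) ℂ) :
    eaMap (Φ ∘ₗ submatrixLinearMap (Prod.map id f)) (Ψ ∘ₗ submatrixLinearMap (Prod.map id g))
        ψ χ = eaMap Φ Ψ (ψ.submatrix (Prod.map f g) (Prod.map f g)) χ := by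
  rw [eaMap, lmapTensor_comp, LinearMap.comp_apply, lmapTensor_submatrixLinearMap]
  rfl

lemma eaMap_zero_state (Φ : Matrix (I × K') (I × K') ℂ →ₗ[ℂ] Matrix J J ℂ)
    (Ψ : Matrix (L × K) (L × K) ℂ →ₗ[ℂ] Matrix N N ℂ) (χ : Matrix (I × L) (I × L) ℂ) :
    eaMap Φ Ψ 0 χ = 0 := by
  simp [eaMap]

end EntanglementAssisted

lemma vecMulVec_star_submatrix {m n : Type*} (v : n → ℂ) (g : m → n) :
    (Matrix.vecMulVec v (star v)).submatrix g g = Matrix.vecMulVec (v ∘ g) (star (v ∘ g)) :=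
  rfl

lemma vecMulVec_sqrt_smul_star {n : Type*} {a : ℝ} (ha : 0 ≤ a) (v : n → ℂ) :
    Matrix.vecMulVec (√a • v) (star (√a • v)) = a • Matrix.vecMulVec v (star v) := by
  rw [star_smul, star_trivial, Matrix.smul_vecMulVec, Matrix.vecMulVec_smul, smul_smul,
    Real.mul_self_sqrt ha]

lemma eaMap_blockSum_mixVec {A B : Type*} [Fintype A] [DecidableEq A] [Fintype B]
    [Fintype J] [Fintype L] [DecidableEq L] {d₁ d₂ : ℕ} {a b : ℝ}
    (ha : 0 ≤ a) (hb : 0 ≤ b) (v₁ : Fin d₁ × Fin d₁ → ℂ) (v₂ : Fin d₂ × Fin d₂ → ℂ)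
    (E₁ : CPTP (A × Fin d₁) J) (E₂ : CPTP (A × Fin d₂) J)
    (D₁ : CPTP (L × Fin d₁) B) (D₂ : CPTP (L × Fin d₂) B) (χ : Matrix (A × L) (A × L) ℂ) :
    eaMap (E₁.blockSum E₂).toLin (D₁.blockSum D₂).toLin
        (Matrix.vecMulVec (mixVec a b v₁ v₂) (star (mixVec a b v₁ v₂))) χ =
      a • eaMap E₁.toLin D₁.toLin (Matrix.vecMulVec v₁ (star v₁)) χ +
        b • eaMap E₂.toLin D₂.toLin (Matrix.vecMulVec v₂ (star v₂)) χ := by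
  have h₁₁ : mixVec a b v₁ v₂ ∘ Prod.map (Fin.castAdd d₂) (Fin.castAdd d₂) = √a • v₁ := by
    funext ⟨c, c'⟩; simp
  have h₁₂ : mixVec a b v₁ v₂ ∘ Prod.map (Fin.castAdd d₂) (Fin.natAdd d₁) = 0 := by
    funext ⟨c, c'⟩; simp
  have h₂₁ : mixVec a b v₁ v₂ ∘ Prod.map (Fin.natAdd d₁) (Fin.castAdd d₂) = 0 := by
    funext ⟨c, c'⟩; simp
  have h₂₂ : mixVec a b v₁ v₂ ∘ Prod.map (Fin.natAdd d₁) (Fin.natAdd d₁) = √b • v₂ := by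
    funext ⟨c, c'⟩; simp
  simp only [CPTP.blockSum, eaMap_add_left, eaMap_add_right, eaMap_comp_submatrixLinearMap,
    vecMulVec_star_submatrix, h₁₁, h₁₂, h₂₁, h₂₂, vecMulVec_sqrt_smul_star ha,
    vecMulVec_sqrt_smul_star hb, star_zero, Matrix.zero_vecMulVec, eaMap_zero_state,
    eaMap_smul_state, add_zero, zero_add]

theorem convex_EA_codes_general {dA dB : ℕ} (M : ℕ) :
    Convex ℝ {ζ : Matrix (Fin M × Fin dB) (Fin M × Fin dB) ℂ →ₗ[ℂ]
        Matrix (Fin dA × Fin M) (Fin dA × Fin M) ℂ |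
      ∃ (dK : ℕ) (ψ : Matrix (Fin dK × Fin dK) (Fin dK × Fin dK) ℂ),
        IsState ψ ∧ IsPure ψ ∧
        ∃ (En : CPTP (Fin M × Fin dK) (Fin dA)) (De : CPTP (Fin dB × Fin dK) (Fin M)),
          ClassicalInputFst En ∧ ClassicalOutput De ∧
          ∀ χ, ζ χ = lmapTensor En.toLin De.toLin
            (Matrix.reindex (Equiv.prodProdProdComm (Fin M) (Fin dB) (Fin dK) (Fin dK))
              (Equiv.prodProdProdComm (Fin M) (Fin dB) (Fin dK) (Fin dK)) (χ ⊗ₖ ψ))} := by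
  rintro ζ₁ ⟨d₁, ψ₁, hψ₁, ⟨v₁, rfl⟩, E₁, D₁, hE₁, hD₁, hζ₁⟩
    ζ₂ ⟨d₂, ψ₂, hψ₂, ⟨v₂, rfl⟩, E₂, D₂, hE₂, hD₂, hζ₂⟩ a b ha hb hab
  refine ⟨d₁ + d₂, _, isState_vecMulVec_mixVec ha hb hab hψ₁ hψ₂, ⟨mixVec a b v₁ v₂, rfl⟩,
    E₁.blockSum E₂, D₁.blockSum D₂, classicalInputFst_blockSum hE₁ hE₂,
    classicalOutput_blockSum hD₁ hD₂, fun χ => ?_⟩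
  rw [LinearMap.add_apply, LinearMap.smul_apply, LinearMap.smul_apply, hζ₁, hζ₂]
  exact (eaMap_blockSum_mixVec ha hb v₁ v₂ E₁ E₂ D₁ D₂ χ).symm

/-- The set `C^{EA}_M` of joint input-output maps realizable by
entanglement-assisted codes of size `M` is convex. -/
theorem convex_EA_codes {dA dB : ℕ} (hdA : 0 < dA) (hdB : 0 < dB) (M : ℕ) (hM : 0 < M) :
    Convex ℝ {ζ : Matrix (Fin M × Fin dB) (Fin M × Fin dB) ℂ →ₗ[ℂ]
        Matrix (Fin dA × Fin M) (Fin dA × Fin M) ℂ |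
      ∃ (dK : ℕ) (ψ : Matrix (Fin dK × Fin dK) (Fin dK × Fin dK) ℂ),
        IsState ψ ∧ IsPure ψ ∧
        ∃ (En : CPTP (Fin M × Fin dK) (Fin dA)) (De : CPTP (Fin dB × Fin dK) (Fin M)),
          ClassicalInputFst En ∧ ClassicalOutput De ∧
          ∀ χ, ζ χ = lmapTensor En.toLin De.toLin
            (Matrix.reindex (Equiv.prodProdProdComm (Fin M) (Fin dB) (Fin dK) (Fin dK))
              (Equiv.prodProdProdComm (Fin M) (Fin dB) (Fin dK) (Fin dK)) (χ ⊗ₖ ψ))} :=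
  convex_EA_codes_general M

end FQAVC
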